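/- Consider the 2-valued group on ℕ with multiplication mul x y = {x + y, Nat.dist x y}, unit 0, and inv = id, with generating set S = {1}. Then for all natural numbers x and r, the ball B_S(x, r) = {y ∈ ℕ | ∃ m ≤ r, y ∈ Set(x*1*⋯*1 (m factors))} has cardinality exactly 1 + r + min x r. In particular the cardinality of a ball in the Cayley graph of a multivalued group can depend on its center. -/
import Mathlib


/-- An `n`-valued group: multiplication takes values in `n`-element multisets. -/
structure NValuedGroup (n : ℕ) (X : Type*) where
  mul : X → X → Multiset X
  e : X
  inv : X → X
  one_le : 1 ≤ n
  card_mul : ∀ x y, (mul x y).card = n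
  assoc : ∀ x y z, (mul x y).bind (fun t => mul t z) = (mul y z).bind (fun t => mul x t)
  e_mul : ∀ x, mul e x = Multiset.replicate n x
  mul_e : ∀ x, mul x e = Multiset.replicate n x
  inv_mul : ∀ x, e ∈ mul (inv x) x
  mul_inv : ∀ x, e ∈ mul x (inv x)

variable {n : ℕ} {X : Type*}

/-- The multiset `x * s₁ * ⋯ * s_k` (iterated left-to-right, starting from `{x}`). -/
def NValuedGroup.wordProd (G : NValuedGroup n X) (x : X) (l : List X) : Multiset X :=
  l.foldl (fun m s => m.bind (fun t => G.mul t s)) {x}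

/-- The ball `B_S(x, r)`: elements lying in `Set(x * s₁ * ⋯ * s_m)` for some `m ≤ r`,
`s₁, …, s_m ∈ S`. -/
def NValuedGroup.ball (G : NValuedGroup n X) (S : Set X) (x : X) (r : ℕ) : Set X :=
  {y | ∃ l : List X, l.length ≤ r ∧ (∀ s ∈ l, s ∈ S) ∧ y ∈ G.wordProd x l}

/-- `S` generates `X`: every element lies in `Set(s₁ * ⋯ * s_m)` for some `m ≥ 1`,
`s₁, …, s_m ∈ S`. -/
def NValuedGroup.IsGenSet (G : NValuedGroup n X) (S : Set X) : Prop :=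
  ∀ x : X, ∃ s₀ ∈ S, ∃ l : List X, (∀ s ∈ l, s ∈ S) ∧ x ∈ G.wordProd s₀ l

lemma wordProd_append_singleton (G : NValuedGroup n X) (x s : X) (l : List X) :
    G.wordProd x (l ++ [s]) = (G.wordProd x l).bind (fun t => G.mul t s) := by
  simp [NValuedGroup.wordProd, List.foldl_append]

/-- For the 2-valued group on `ℕ` with `mul x y = {x + y, |x - y|}`, unit `0`, `inv = id`,
and generating set `S = {1}`, the ball `B_S(x, r)` has cardinality `1 + r + min x r`;
in particular it depends on the center `x`. -/
theorem nat_two_valued_ball_card (G : NValuedGroup 2 ℕ)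
    (hmul : G.mul = fun x y => ({x + y, Nat.dist x y} : Multiset ℕ))
    (he : G.e = 0) (hinv : G.inv = id) (x r : ℕ) :
    Nat.card (G.ball {1} x r) = 1 + r + min x r := by
  have fwd : ∀ l : List ℕ, (∀ s ∈ l, s = 1) → ∀ y ∈ G.wordProd x l,
      Nat.dist x y ≤ l.length := by
    intro l
    induction l using List.reverseRecOn with
    | nil =>
      intro _ y hy
      simp [NValuedGroup.wordProd] at hy
      simp [hy, Nat.dist_self]
    | append_singleton l s ih =>
      intro hl y hy
      rw [wordProd_append_singleton] at hy
      rw [Multiset.mem_bind] at hy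
      obtain ⟨t, ht, hyt⟩ := hy
      have hs : s = 1 := hl s (by simp)
      have hd := ih (fun a ha => hl a (by simp [ha])) t ht
      subst hs
      rw [hmul] at hyt
      simp [Multiset.mem_cons, Multiset.mem_singleton] at hyt
      simp only [List.length_append, List.length_singleton]
      rcases hyt with h | h <;> subst h <;> simp [Nat.dist] at hd ⊢ <;> omega
  have bwd : ∀ m y : ℕ, Nat.dist x y = m → y ∈ G.wordProd x (List.replicate m 1) := by
    intro m
    induction m with
    | zero =>
      intro y hy
      have : y = x := by simp [Nat.dist] at hy; omega
      simp [NValuedGroup.wordProd, this]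
    | succ m ih =>
      intro y hy
      rcases le_or_gt x y with h | h
      · have hy' : y = x + (m + 1) := by simp [Nat.dist] at hy; omega
        set t := x + m with htdef
        have ht : t ∈ G.wordProd x (List.replicate m 1) := ih t (by simp [Nat.dist]; omega)
        rw [List.replicate_succ', wordProd_append_singleton, Multiset.mem_bind]
        exact ⟨t, ht, by rw [hmul]; simp [hy', htdef]; omega⟩
      · have hy' : x = y + (m + 1) := by simp [Nat.dist] at hy; omega
        set t := y + 1 with htdef
        have ht : t ∈ G.wordProd x (List.replicate m 1) := ih t (by simp [Nat.dist]; omega)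
        rw [List.replicate_succ', wordProd_append_singleton, Multiset.mem_bind]
        refine ⟨t, ht, ?_⟩
        rw [hmul]
        have : Nat.dist t 1 = y := by simp [Nat.dist]; omega
        simp [this]
  have hball : G.ball {1} x r = Set.Icc (x - r) (x + r) := by
    ext y
    constructor
    · rintro ⟨l, hlen, hS, hy⟩
      have := fwd l (fun s hs => hS s hs) y hy
      simp [Nat.dist] at this
      simp only [Set.mem_Icc]
      omega
    · intro hy
      simp only [Set.mem_Icc] at hy
      refine ⟨List.replicate (Nat.dist x y) 1, ?_, by simp, bwd _ y rfl⟩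
      simp [Nat.dist]; omega
  rw [hball, Nat.card_eq_card_toFinset, Set.toFinset_Icc, Nat.card_Icc]
  omega
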